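/- In a 1-differential poset Γ, define the Plancherel transition probabilities p_{v,w} = d(∅,w) / ((n+1) d(∅,v)) for v ⋖ w with |v| = n. Then for vertices u ≤ v of ranks k ≤ n, the probability of reaching v from u along the Markov chain with these transition probabilities is p(u,v) = (k!/n!) · d(u,v) · d(∅,v) / d(∅,u); that is, the function p(u,v) := (k!/n!) d(u,v) d(∅,v)/d(∅,u) satisfies Σ_{v : |v| = n} p(u,v) · p_{v,w} = p(u,w) for all w of rank n+1, and p(u,u) = 1. -/

import Mathlib

/-- A branching diagram: a graded graph with finite levels, a unique minimal
vertex `bot` of rank `0`, no maximal vertices, and every vertex of positive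
rank covering some vertex. `covers u w` means `w` covers `u` (`u ⋖ w`). -/
structure BranchingDiagram where
  V : Type
  rank : V → ℕ
  covers : V → V → Prop
  rank_covers : ∀ u w, covers u w → rank w = rank u + 1
  finite_level : ∀ n : ℕ, {v : V | rank v = n}.Finite
  bot : V
  rank_bot : rank bot = 0
  bot_unique : ∀ v, rank v = 0 → v = bot
  no_max : ∀ v, ∃ w, covers v w
  exists_pred : ∀ v, rank v ≠ 0 → ∃ u, covers u v

/-- `Γ.d u w` is the number of saturated chains (paths along covering relations)
from `u` to `w`. -/
noncomputable def BranchingDiagram.d (Γ : BranchingDiagram) (u w : Γ.V) : ℕ :=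
  Set.ncard {p : List Γ.V | p.Chain' Γ.covers ∧ p.head? = some u ∧ p.getLast? = some w}

/-- A `1`-differential poset: (D1) for distinct vertices of equal rank, the number
of common lower covers equals the number of common upper covers; (D2) each vertex
is covered by one more vertex than it covers. -/
def BranchingDiagram.IsDifferential (Γ : BranchingDiagram) : Prop :=
  (∀ u v : Γ.V, u ≠ v → Γ.rank u = Γ.rank v →
      Set.ncard {x | Γ.covers x u ∧ Γ.covers x v} =
        Set.ncard {w | Γ.covers u w ∧ Γ.covers v w}) ∧
  (∀ v : Γ.V, Set.ncard {w | Γ.covers v w} = Set.ncard {u | Γ.covers u v} + 1)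

/-
The formula only uses the path-count recursion `d(u,w) = Σ_{v ⋖ w} d(u,v)` for `|u| < |w|`:
in the summand `p(u,v)·p_{v,w}` the factor `d(∅,v)` cancels (it is positive, as every vertex is
reached from `∅`), and `(n+1)·n! = (n+1)!`, so the sum is `k!/(n+1)! · d(∅,w)/d(∅,u)` times
`Σ_{v ⋖ w} d(u,v) = d(u,w)`.
-/

namespace BranchingDiagram

variable (Γ : BranchingDiagram)

def chains (u w : Γ.V) : Set (List Γ.V) :=
  {p | p.IsChain Γ.covers ∧ p.head? = some u ∧ p.getLast? = some w}

lemma d_eq_ncard_chains (u w : Γ.V) : Γ.d u w = (Γ.chains u w).ncard := rfl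

lemma finite_setOf_covers (w : Γ.V) : {v | Γ.covers v w}.Finite :=
  (Γ.finite_level (Γ.rank w - 1)).subset fun v hv => by
    have := Γ.rank_covers v w hv
    simp only [Set.mem_ofPred_eq]
    omega

variable {Γ}

lemma rank_add_one_eq_of_mem_chains {u w : Γ.V} {p : List Γ.V} (hp : p ∈ Γ.chains u w) :
    Γ.rank w + 1 = Γ.rank u + p.length := by
  induction p generalizing u with
  | nil => simp [chains] at hp
  | cons a t ih =>
    obtain ⟨hc, hh, hl⟩ := hp
    cases Option.some_injective _ hh
    cases t with
    | nil => cases Option.some_injective _ hl; simp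
    | cons b t =>
      rw [List.isChain_cons_cons] at hc
      have := ih ⟨hc.2, rfl, by simpa using hl⟩
      have := Γ.rank_covers a b hc.1
      simp only [List.length_cons] at *
      omega

lemma eq_singleton_of_mem_chains {u w : Γ.V} {p : List Γ.V} (hp : p ∈ Γ.chains u w)
    (h : Γ.rank w ≤ Γ.rank u) : p = [u] := by
  have hlen := rank_add_one_eq_of_mem_chains hp
  have hne : p ≠ [] := by rintro rfl; simp [chains] at hp
  have hpos := List.length_pos_iff.mpr hne
  obtain ⟨a, rfl⟩ := List.length_eq_one_iff.mp (show p.length = 1 by omega)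
  cases Option.some_injective _ hp.2.1
  rfl

lemma chains_self (u : Γ.V) : Γ.chains u u = {[u]} :=
  Set.eq_singleton_iff_unique_mem.mpr
    ⟨⟨List.isChain_singleton u, rfl, rfl⟩, fun _ hp => eq_singleton_of_mem_chains hp le_rfl⟩

lemma d_self (u : Γ.V) : Γ.d u u = 1 := by
  rw [d_eq_ncard_chains, chains_self, Set.ncard_singleton]

lemma append_singleton_mem_chains {u v w : Γ.V} {q : List Γ.V} (hq : q ∈ Γ.chains u v)
    (hvw : Γ.covers v w) : q ++ [w] ∈ Γ.chains u w := by
  obtain ⟨hc, hh, hl⟩ := hq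
  have hq0 : q ≠ [] := by rintro rfl; simp at hh
  refine ⟨hc.append (List.isChain_singleton w) ?_, by rwa [List.head?_append_of_ne_nil _ hq0],
    by simp⟩
  simp only [hl, Option.mem_def, Option.some.injEq, List.head?_cons]
  rintro _ rfl _ rfl
  exact hvw

lemma chains_eq_biUnion {u w : Γ.V} (h : Γ.rank u < Γ.rank w) :
    Γ.chains u w = ⋃ v ∈ {v | Γ.covers v w}, (· ++ [w]) '' Γ.chains u v := by
  ext p
  simp only [Set.mem_iUnion, Set.mem_image, Set.mem_ofPred_eq, exists_prop]
  constructor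
  · intro hp
    have hlen := rank_add_one_eq_of_mem_chains hp
    obtain ⟨hc, hh, hl⟩ := hp
    have hq0 : p.dropLast ≠ [] := by
      rw [← List.length_pos_iff, List.length_dropLast]
      omega
    have hpq : p.dropLast ++ [w] = p := List.dropLast_append_getLast? w hl
    rw [← hpq] at hc hh
    obtain ⟨hcq, -, hlast⟩ := List.isChain_append.mp hc
    have hqlast := List.getLast?_eq_getLast_of_ne_nil hq0
    refine ⟨_, hlast _ hqlast w rfl, p.dropLast, ⟨hcq, ?_, hqlast⟩, hpq⟩
    rwa [List.head?_append_of_ne_nil _ hq0] at hh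
  · rintro ⟨v, hv, q, hq, rfl⟩
    exact append_singleton_mem_chains hq hv

lemma chains_finite (u w : Γ.V) : (Γ.chains u w).Finite := by
  induction hn : Γ.rank w using Nat.strong_induction_on generalizing w with
  | _ n ih =>
    rcases lt_or_ge (Γ.rank u) (Γ.rank w) with h | h
    · rw [chains_eq_biUnion h]
      refine (Γ.finite_setOf_covers w).biUnion fun v hv => Set.Finite.image _ ?_
      have := Γ.rank_covers v w hv
      exact ih _ (by omega) v rfl
    · exact (Set.finite_singleton [u]).subset fun _ hp => eq_singleton_of_mem_chains hp h

lemma d_eq_finsum_d_of_rank_lt {u w : Γ.V} (h : Γ.rank u < Γ.rank w) :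
    Γ.d u w = ∑ᶠ v ∈ {v | Γ.covers v w}, Γ.d u v := by
  have hinj : Function.Injective (· ++ [w] : List Γ.V → List Γ.V) :=
    List.append_left_injective _
  rw [d_eq_ncard_chains, chains_eq_biUnion h, (Γ.finite_setOf_covers w).ncard_biUnion
    (fun v _ => (chains_finite u v).image _)]
  · exact finsum_mem_congr rfl fun v _ => Set.ncard_image_of_injective _ hinj
  · intro v₁ _ v₂ _ hne
    refine Set.disjoint_left.mpr ?_
    rintro _ ⟨q₁, hq₁, rfl⟩ ⟨q₂, hq₂, heq⟩
    cases hinj heq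
    exact hne (Option.some_injective _ (hq₁.2.2.symm.trans hq₂.2.2))

lemma chains_bot_nonempty (v : Γ.V) : (Γ.chains Γ.bot v).Nonempty := by
  induction hn : Γ.rank v generalizing v with
  | zero =>
    cases Γ.bot_unique v hn
    exact ⟨[Γ.bot], List.isChain_singleton _, rfl, rfl⟩
  | succ n ih =>
    obtain ⟨x, hx⟩ := Γ.exists_pred v (by omega)
    have := Γ.rank_covers x v hx
    obtain ⟨q, hq⟩ := ih x (by omega)
    exact ⟨q ++ [v], append_singleton_mem_chains hq hx⟩

lemma d_bot_pos (v : Γ.V) : 0 < Γ.d Γ.bot v :=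
  (Set.ncard_pos (chains_finite _ v)).mpr (chains_bot_nonempty v)

end BranchingDiagram

theorem stmt_10_general (Γ : BranchingDiagram) (u : Γ.V) (k : ℕ)
    (hu : Γ.rank u = k) :
    ((k.factorial : ℝ) / k.factorial * Γ.d u u * Γ.d Γ.bot u / Γ.d Γ.bot u = 1) ∧
    (∀ n : ℕ, k ≤ n → ∀ w : Γ.V, Γ.rank w = n + 1 →
      ∑ᶠ v ∈ {v | Γ.covers v w},
        ((k.factorial : ℝ) / n.factorial * Γ.d u v * Γ.d Γ.bot v / Γ.d Γ.bot u) *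
          ((Γ.d Γ.bot w : ℝ) / ((n + 1) * Γ.d Γ.bot v)) =
      (k.factorial : ℝ) / (n + 1).factorial * Γ.d u w * Γ.d Γ.bot w / Γ.d Γ.bot u) := by
  have hd_bot (v : Γ.V) : (Γ.d Γ.bot v : ℝ) ≠ 0 := by exact_mod_cast (Γ.d_bot_pos v).ne'
  refine ⟨?_, fun n hkn w hw => ?_⟩
  · rw [Γ.d_self u, Nat.cast_one, mul_one, div_self (by positivity), one_mul,
      div_self (hd_bot u)]
  have hterm : ∀ v ∈ {v | Γ.covers v w},
      (k.factorial : ℝ) / n.factorial * Γ.d u v * Γ.d Γ.bot v / Γ.d Γ.bot u *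
          ((Γ.d Γ.bot w : ℝ) / ((n + 1) * Γ.d Γ.bot v)) =
        Γ.d u v * ((k.factorial : ℝ) / (n + 1).factorial * Γ.d Γ.bot w / Γ.d Γ.bot u) := by
    intro v _
    have := hd_bot v
    rw [Nat.factorial_succ]
    push_cast
    field_simp
  rw [finsum_mem_congr rfl hterm, ← finsum_mem_mul,
    ← Nat.cast_finsum_mem (Γ.finite_setOf_covers w),
    ← BranchingDiagram.d_eq_finsum_d_of_rank_lt (by omega)]
  ring

/-- Plancherel transition probabilities on a `1`-differential poset: the function
`p(u,v) = (k!/n!)·d(u,v)·d(∅,v)/d(∅,u)` satisfies `p(u,u) = 1` and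
`Σ_{|v|=n} p(u,v)·p_{v,w} = p(u,w)` for `w` of rank `n+1`, where
`p_{v,w} = d(∅,w)/((n+1)·d(∅,v))` for `v ⋖ w` (and `0` otherwise, so the sum
runs over `v ⋖ w`). -/
theorem stmt_10 (Γ : BranchingDiagram) (hΓ : Γ.IsDifferential) (u : Γ.V) (k : ℕ)
    (hu : Γ.rank u = k) :
    ((k.factorial : ℝ) / k.factorial * Γ.d u u * Γ.d Γ.bot u / Γ.d Γ.bot u = 1) ∧
    (∀ n : ℕ, k ≤ n → ∀ w : Γ.V, Γ.rank w = n + 1 →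
      ∑ᶠ v ∈ {v | Γ.covers v w},
        ((k.factorial : ℝ) / n.factorial * Γ.d u v * Γ.d Γ.bot v / Γ.d Γ.bot u) *
          ((Γ.d Γ.bot w : ℝ) / ((n + 1) * Γ.d Γ.bot v)) =
      (k.factorial : ℝ) / (n + 1).factorial * Γ.d u w * Γ.d Γ.bot w / Γ.d Γ.bot u) :=
  stmt_10_general Γ u k hu
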